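/- Let X be a random field on [0,∞)² with self-similar covariance of index (H₁,H₂), H₁, H₂ ∈ (0,1), with second-moment stationary rectangular increments and E[X(1,1)²] = 1, and let R(v₁,v₂) = e^{−H₁v₁ − H₂v₂}·E[X(1,1)·X(e^{v₁}, e^{v₂})]. Then R(v₁,v₂) = R(v₁,−v₂) for all (v₁,v₂) ∈ ℝ² if and only if R(v) = R₀(v) for all v ∈ ℝ². -/
import Mathlib

open MeasureTheory Real

/-- `F_H(v) = 2 cosh(Hv) - |2 sinh(v/2)|^{2H}`. -/
noncomputable def Ffun (H v : ℝ) : ℝ :=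
  2 * Real.cosh (H * v) - |2 * Real.sinh (v / 2)| ^ (2 * H)

/-- `R₀(v₁,v₂) = (1/4) F_{H₁}(v₁) F_{H₂}(v₂)`. -/
noncomputable def Rzero (H₁ H₂ v₁ v₂ : ℝ) : ℝ :=
  (1 / 4) * Ffun H₁ v₁ * Ffun H₂ v₂

lemma Ffun_even (H v : ℝ) : Ffun H (-v) = Ffun H v := by
  unfold Ffun
  rw [mul_neg, Real.cosh_neg, neg_div, Real.sinh_neg, mul_neg, abs_neg]

lemma Ffun_exp (H v : ℝ) (hv : 0 ≤ v) :
    Real.exp (-(H*v)) * (1 + Real.exp v ^ (2*H) - (Real.exp v - 1)^(2*H)) = Ffun H v := by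
  have h1 : Real.exp v ^ (2*H) = Real.exp (v*(2*H)) := (Real.exp_mul v (2*H)).symm
  have hs : (0:ℝ) ≤ 2 * Real.sinh (v/2) :=
    mul_nonneg (by norm_num) (Real.sinh_nonneg_iff.mpr (by linarith))
  have h2 : Real.exp (-(H*v)) * (Real.exp v - 1)^(2*H) = |2 * Real.sinh (v/2)| ^ (2*H) := by
    rw [abs_of_nonneg hs]
    have e1 : Real.exp (-(H*v)) = (Real.exp (-(v/2)))^(2*H) := by
      rw [← Real.exp_mul]; congr 1; ring
    rw [e1, ← Real.mul_rpow (le_of_lt (Real.exp_pos _))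
      (by {have := Real.one_le_exp hv; linarith} : (0:ℝ) ≤ Real.exp v - 1)]
    congr 1
    rw [Real.sinh_eq, mul_sub]
    have : Real.exp (-(v/2)) * Real.exp v = Real.exp (v/2) := by
      rw [← Real.exp_add]; congr 1; ring
    rw [this]; ring
  have h3 : Real.exp (-(H*v)) * Real.exp (v*(2*H)) = Real.exp (H*v) := by
    rw [← Real.exp_add]; congr 1; ring
  calc Real.exp (-(H*v)) * (1 + Real.exp v ^ (2*H) - (Real.exp v - 1)^(2*H))
      = Real.exp (-(H*v)) + Real.exp (-(H*v)) * Real.exp (v*(2*H))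
        - Real.exp (-(H*v)) * (Real.exp v - 1)^(2*H) := by rw [h1]; ring
    _ = Real.exp (-(H*v)) + Real.exp (H*v) - |2 * Real.sinh (v/2)| ^ (2*H) := by rw [h3, h2]
    _ = Ffun H v := by rw [Ffun, Real.cosh_eq]; ring


lemma polar_integrable {Ω : Type*} [MeasurableSpace Ω] {P : Measure Ω} {f g : Ω → ℝ}
    (hf : Integrable (fun ω => (f ω)^2) P) (hg : Integrable (fun ω => (g ω)^2) P)
    (hfg : Integrable (fun ω => (f ω + g ω)^2) P) :
    Integrable (fun ω => f ω * g ω) P := by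
  have h : (fun ω => f ω * g ω) = fun ω => ((f ω + g ω)^2 - (f ω)^2 - (g ω)^2)/2 := by
    funext ω; ring
  rw [h]; exact ((hfg.sub hf).sub hg).div_const 2

lemma aesm_diag_prod {Ω : Type*} [MeasurableSpace Ω] {P : Measure Ω} {a b c d : Ω → ℝ}
    (hb2 : AEStronglyMeasurable (fun ω => (b ω)^2) P)
    (hc2 : AEStronglyMeasurable (fun ω => (c ω)^2) P)
    (hab : AEStronglyMeasurable (fun ω => a ω * b ω) P)
    (hac : AEStronglyMeasurable (fun ω => a ω * c ω) P)
    (hbd : AEStronglyMeasurable (fun ω => b ω * d ω) P)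
    (hcd : AEStronglyMeasurable (fun ω => c ω * d ω) P)
    (hs : AEStronglyMeasurable (fun ω => a ω * d ω + b ω * c ω) P) :
    AEStronglyMeasurable (fun ω => a ω * d ω) P := by
  have B := hb2.aemeasurable; have C := hc2.aemeasurable
  have AB := hab.aemeasurable; have AC := hac.aemeasurable
  have BD := hbd.aemeasurable; have CD := hcd.aemeasurable
  have S := hs.aemeasurable
  set g : Ω → ℝ := fun ω =>
    if B.mk _ ω + C.mk _ ω = 0 then S.mk _ ω
    else (AB.mk _ ω * BD.mk _ ω + AC.mk _ ω * CD.mk _ ω) / (B.mk _ ω + C.mk _ ω) with hgdef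
  have hgm : Measurable g := by
    apply Measurable.ite
    · exact measurableSet_eq_fun (B.measurable_mk.add C.measurable_mk) measurable_const
    · exact S.measurable_mk
    · exact ((AB.measurable_mk.mul BD.measurable_mk).add
        (AC.measurable_mk.mul CD.measurable_mk)).div (B.measurable_mk.add C.measurable_mk)
  refine ⟨g, hgm.stronglyMeasurable, ?_⟩
  filter_upwards [B.ae_eq_mk, C.ae_eq_mk, AB.ae_eq_mk, AC.ae_eq_mk, BD.ae_eq_mk,
    CD.ae_eq_mk, S.ae_eq_mk] with ω e1 e2 e3 e4 e5 e6 e7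
  rw [hgdef]
  simp only [← e1, ← e2, ← e3, ← e4, ← e5, ← e6, ← e7]
  split_ifs with h
  · have hb : b ω = 0 := by
      have h1 := sq_nonneg (b ω); have h2 := sq_nonneg (c ω)
      have hb2 : (b ω)^2 = 0 := by linarith
      exact pow_eq_zero_iff (by norm_num) |>.mp hb2
    have hc : c ω = 0 := by
      have h1 := sq_nonneg (b ω); have h2 := sq_nonneg (c ω)
      have hc2 : (c ω)^2 = 0 := by linarith
      exact pow_eq_zero_iff (by norm_num) |>.mp hc2
    simp [hb, hc]
  · rw [eq_div_iff h]; ring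

/-- Core quadratic computation: from integrability and values of the nine rectangle
squares, the symmetrized diagonal covariance sum is determined. -/
lemma core_sum {Ω : Type*} [MeasurableSpace Ω] {P : Measure Ω} {a b c d : Ω → ℝ}
    {A1 B1 A2 B2 : ℝ}
    (I1 : Integrable (fun ω => (a ω)^2) P) (V1 : ∫ ω, (a ω)^2 ∂P = 1)
    (I2 : Integrable (fun ω => (b ω)^2) P) (V2 : ∫ ω, (b ω)^2 ∂P = B1)
    (I3 : Integrable (fun ω => (c ω)^2) P) (V3 : ∫ ω, (c ω)^2 ∂P = B2)
    (I4 : Integrable (fun ω => (d ω)^2) P) (V4 : ∫ ω, (d ω)^2 ∂P = B1 * B2)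
    (I5 : Integrable (fun ω => (a ω + b ω)^2) P) (V5 : ∫ ω, (a ω + b ω)^2 ∂P = A1)
    (I6 : Integrable (fun ω => (a ω + c ω)^2) P) (V6 : ∫ ω, (a ω + c ω)^2 ∂P = A2)
    (I7 : Integrable (fun ω => (b ω + d ω)^2) P) (V7 : ∫ ω, (b ω + d ω)^2 ∂P = B1 * A2)
    (I8 : Integrable (fun ω => (c ω + d ω)^2) P) (V8 : ∫ ω, (c ω + d ω)^2 ∂P = A1 * B2)
    (I9 : Integrable (fun ω => (a ω + b ω + c ω + d ω)^2) P)
    (V9 : ∫ ω, (a ω + b ω + c ω + d ω)^2 ∂P = A1 * A2) :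
    (∫ ω, a ω * (a ω + b ω + c ω + d ω) ∂P)
      + (∫ ω, (a ω + b ω) * (a ω + c ω) ∂P)
      = (1 + A1 - B1) * (1 + A2 - B2) / 2 := by
  have Iab : Integrable (fun ω => a ω * b ω) P := polar_integrable I1 I2 I5
  have Iac : Integrable (fun ω => a ω * c ω) P := polar_integrable I1 I3 I6
  have Ibd : Integrable (fun ω => b ω * d ω) P := polar_integrable I2 I4 I7
  have Icd : Integrable (fun ω => c ω * d ω) P := polar_integrable I3 I4 I8
  have Isig : Integrable (fun ω => a ω * d ω + b ω * c ω) P := by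
    have e : (fun ω => a ω * d ω + b ω * c ω)
        = fun ω => ((a ω + b ω + c ω + d ω)^2 - (a ω)^2 - (b ω)^2 - (c ω)^2 - (d ω)^2)/2
          - a ω * b ω - a ω * c ω - b ω * d ω - c ω * d ω := by
      funext ω; ring
    rw [e]
    exact (((((((I9.sub I1).sub I2).sub I3).sub I4).div_const 2).sub Iab).sub Iac).sub Ibd
      |>.sub Icd
  have hAD : AEStronglyMeasurable (fun ω => a ω * d ω) P :=
    aesm_diag_prod I2.aestronglyMeasurable I3.aestronglyMeasurable Iab.aestronglyMeasurable
      Iac.aestronglyMeasurable Ibd.aestronglyMeasurable Icd.aestronglyMeasurable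
      Isig.aestronglyMeasurable
  have hBC : AEStronglyMeasurable (fun ω => b ω * c ω) P := by
    have e : (fun ω => b ω * c ω) = fun ω => (a ω * d ω + b ω * c ω) - a ω * d ω := by
      funext ω; ring
    rw [e]
    exact Isig.aestronglyMeasurable.sub hAD
  have IaS : Integrable (fun ω => a ω * (a ω + b ω + c ω + d ω)) P := by
    have hm : AEStronglyMeasurable (fun ω => a ω * (a ω + b ω + c ω + d ω)) P := by
      have e : (fun ω => a ω * (a ω + b ω + c ω + d ω))
          = fun ω => (a ω)^2 + a ω * b ω + a ω * c ω + a ω * d ω := by funext ω; ring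
      rw [e]
      exact ((I1.aestronglyMeasurable.add Iab.aestronglyMeasurable).add
        Iac.aestronglyMeasurable).add hAD
    have Ig : Integrable (fun ω => ((a ω)^2 + (a ω + b ω + c ω + d ω)^2)/2) P :=
      (I1.add I9).div_const 2
    refine Integrable.mono' Ig hm (Filter.Eventually.of_forall fun ω => ?_)
    rw [Real.norm_eq_abs, abs_le]
    constructor <;> nlinarith [sq_nonneg (a ω - (a ω + b ω + c ω + d ω)),
      sq_nonneg (a ω + (a ω + b ω + c ω + d ω))]
  have IJ2 : Integrable (fun ω => (a ω + b ω) * (a ω + c ω)) P := by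
    have hm : AEStronglyMeasurable (fun ω => (a ω + b ω) * (a ω + c ω)) P := by
      have e : (fun ω => (a ω + b ω) * (a ω + c ω))
          = fun ω => (a ω)^2 + a ω * b ω + a ω * c ω + b ω * c ω := by funext ω; ring
      rw [e]
      exact ((I1.aestronglyMeasurable.add Iab.aestronglyMeasurable).add
        Iac.aestronglyMeasurable).add hBC
    have Ig : Integrable (fun ω => ((a ω + b ω)^2 + (a ω + c ω)^2)/2) P :=
      (I5.add I6).div_const 2
    refine Integrable.mono' Ig hm (Filter.Eventually.of_forall fun ω => ?_)
    rw [Real.norm_eq_abs, abs_le]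
    constructor <;> nlinarith [sq_nonneg (a ω + b ω - (a ω + c ω)),
      sq_nonneg (a ω + b ω + (a ω + c ω))]
  have IP2 : Integrable (fun ω => (a ω)^2 + (d ω)^2) P := I1.add I4
  have IP3 : Integrable (fun ω => (a ω)^2 + (d ω)^2 + (a ω + b ω)^2) P := IP2.add I5
  have IP4 : Integrable (fun ω => (a ω)^2 + (d ω)^2 + (a ω + b ω)^2 + (a ω + c ω)^2) P :=
    IP3.add I6
  have IP5 : Integrable (fun ω => (a ω)^2 + (d ω)^2 + (a ω + b ω)^2 + (a ω + c ω)^2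
      + (a ω + b ω + c ω + d ω)^2) P := IP4.add I9
  have IM2 : Integrable (fun ω => (b ω)^2 + (c ω)^2) P := I2.add I3
  have IM3 : Integrable (fun ω => (b ω)^2 + (c ω)^2 + (b ω + d ω)^2) P := IM2.add I7
  have IM4 : Integrable (fun ω => (b ω)^2 + (c ω)^2 + (b ω + d ω)^2 + (c ω + d ω)^2) P :=
    IM3.add I8
  rw [← integral_add IaS IJ2]
  have e : (fun ω => a ω * (a ω + b ω + c ω + d ω) + (a ω + b ω) * (a ω + c ω))
      = fun ω => ((a ω)^2 + (d ω)^2 + (a ω + b ω)^2 + (a ω + c ω)^2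
          + (a ω + b ω + c ω + d ω)^2
          - ((b ω)^2 + (c ω)^2 + (b ω + d ω)^2 + (c ω + d ω)^2))/2 := by
    funext ω; ring
  rw [e, integral_div, integral_sub IP5 IM4, integral_add IP4 I9, integral_add IP3 I6,
    integral_add IP2 I5, integral_add I1 I4, integral_add IM3 I8, integral_add IM2 I7,
    integral_add I2 I3, V1, V2, V3, V4, V5, V6, V7, V8, V9]
  ring

set_option maxHeartbeats 1600000 in
/-- Corollary to Proposition 1. Under the hypotheses of Proposition 1,
the Lamperti covariance `R` satisfies `R(v₁,v₂) = R(v₁,−v₂)` for all `v` iff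
`R = R₀`. -/
theorem lamperti_covariance_symmetric_iff_Rzero
    {Ω : Type*} [MeasurableSpace Ω] (P : Measure Ω) [IsProbabilityMeasure P]
    (H₁ H₂ : ℝ) (hH₁ : H₁ ∈ Set.Ioo (0:ℝ) 1) (hH₂ : H₂ ∈ Set.Ioo (0:ℝ) 1)
    (X : ℝ → ℝ → Ω → ℝ)
    (hL2 : ∀ t₁ t₂ : ℝ, 0 ≤ t₁ → 0 ≤ t₂ →
      Integrable (fun ω => (X t₁ t₂ ω) ^ 2) P)
    (hss : ∀ a₁ a₂ : ℝ, 0 < a₁ → 0 < a₂ →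
      ∀ t₁ t₂ s₁ s₂ : ℝ, 0 ≤ t₁ → 0 ≤ t₂ → 0 ≤ s₁ → 0 ≤ s₂ →
        ∫ ω, X (a₁ * t₁) (a₂ * t₂) ω * X (a₁ * s₁) (a₂ * s₂) ω ∂P
          = a₁ ^ (2 * H₁) * a₂ ^ (2 * H₂) * ∫ ω, X t₁ t₂ ω * X s₁ s₂ ω ∂P)
    (hsi : ∀ u₁ u₂ h₁ h₂ : ℝ, 0 ≤ u₁ → 0 ≤ u₂ → 0 ≤ h₁ → 0 ≤ h₂ →
      ∫ ω, (X (u₁ + h₁) (u₂ + h₂) ω - X u₁ (u₂ + h₂) ω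
            - X (u₁ + h₁) u₂ ω + X u₁ u₂ ω) ^ 2 ∂P
        = ∫ ω, (X h₁ h₂ ω - X 0 h₂ ω - X h₁ 0 ω + X 0 0 ω) ^ 2 ∂P)
    (hnorm : ∫ ω, (X 1 1 ω) ^ 2 ∂P = 1)
    (R : ℝ → ℝ → ℝ)
    (hR : ∀ v₁ v₂ : ℝ,
      R v₁ v₂ = Real.exp (-(H₁ * v₁) - H₂ * v₂)
        * ∫ ω, X 1 1 ω * X (Real.exp v₁) (Real.exp v₂) ω ∂P) :
    (∀ v₁ v₂ : ℝ, R v₁ v₂ = R v₁ (-v₂)) ↔ (∀ v₁ v₂ : ℝ, R v₁ v₂ = Rzero H₁ H₂ v₁ v₂) := by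
  have h2H₁ : (0:ℝ) < 2 * H₁ := by nlinarith [hH₁.1]
  have h2H₂ : (0:ℝ) < 2 * H₂ := by nlinarith [hH₂.1]
  -- axis vanishing
  have ax1 : ∀ t₁ : ℝ, 0 ≤ t₁ → X t₁ 0 =ᵐ[P] 0 := by
    intro t₁ ht₁
    have h := hss 1 2 one_pos two_pos t₁ 0 t₁ 0 ht₁ le_rfl ht₁ le_rfl
    simp only [one_mul, mul_zero, Real.one_rpow] at h
    have h2 : (2:ℝ) ^ (2*H₂) ≠ 1 := by
      have : (2:ℝ) ^ (0:ℝ) < 2 ^ (2*H₂) := (Real.rpow_lt_rpow_left_iff one_lt_two).mpr h2H₂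
      rw [Real.rpow_zero] at this
      exact ne_of_gt this
    have hc : ∫ ω, X t₁ 0 ω * X t₁ 0 ω ∂P = 0 := by
      rcases mul_eq_zero.mp (show (1 - (2:ℝ)^(2*H₂)) * ∫ ω, X t₁ 0 ω * X t₁ 0 ω ∂P = 0 by
        linarith) with h' | h'
      · exact absurd (by linarith : (2:ℝ)^(2*H₂) = 1) h2
      · exact h'
    have hc2 : ∫ ω, (X t₁ 0 ω)^2 ∂P = 0 := by
      rw [show (fun ω => (X t₁ 0 ω)^2) = fun ω => X t₁ 0 ω * X t₁ 0 ω from funext fun ω => sq (X t₁ 0 ω)] at *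
      exact hc
    have := (integral_eq_zero_iff_of_nonneg (fun ω => sq_nonneg (X t₁ 0 ω)) (hL2 t₁ 0 ht₁ le_rfl)).mp hc2
    filter_upwards [this] with ω hω
    have : (X t₁ 0 ω)^2 = 0 := hω
    exact pow_eq_zero_iff (by norm_num) |>.mp this

  have ax2 : ∀ t₂ : ℝ, 0 ≤ t₂ → X 0 t₂ =ᵐ[P] 0 := by
    intro t₂ ht₂
    have h := hss 2 1 two_pos one_pos 0 t₂ 0 t₂ le_rfl ht₂ le_rfl ht₂
    simp only [one_mul, mul_zero, Real.one_rpow, mul_one] at h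
    have h2 : (2:ℝ) ^ (2*H₁) ≠ 1 := by
      have : (2:ℝ) ^ (0:ℝ) < 2 ^ (2*H₁) := (Real.rpow_lt_rpow_left_iff one_lt_two).mpr h2H₁
      rw [Real.rpow_zero] at this
      exact ne_of_gt this
    have hc : ∫ ω, X 0 t₂ ω * X 0 t₂ ω ∂P = 0 := by
      rcases mul_eq_zero.mp (show (1 - (2:ℝ)^(2*H₁)) * ∫ ω, X 0 t₂ ω * X 0 t₂ ω ∂P = 0 by
        linarith) with h' | h'
      · exact absurd (by linarith : (2:ℝ)^(2*H₁) = 1) h2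
      · exact h'
    have hc2 : ∫ ω, (X 0 t₂ ω)^2 ∂P = 0 := by
      rw [show (fun ω => (X 0 t₂ ω)^2) = fun ω => X 0 t₂ ω * X 0 t₂ ω from funext fun ω => sq (X 0 t₂ ω)] at *
      exact hc
    have := (integral_eq_zero_iff_of_nonneg (fun ω => sq_nonneg (X 0 t₂ ω)) (hL2 0 t₂ le_rfl ht₂)).mp hc2
    filter_upwards [this] with ω hω
    exact pow_eq_zero_iff (two_ne_zero) |>.mp hω
  -- diagonal values
  have h111 : ∫ ω, X 1 1 ω * X 1 1 ω ∂P = 1 := by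
    rw [show (fun ω => X 1 1 ω * X 1 1 ω) = fun ω => (X 1 1 ω)^2 from funext fun ω => (sq (X 1 1 ω)).symm]
    exact hnorm
  have diag : ∀ a b : ℝ, 0 < a → 0 < b →
      ∫ ω, (X a b ω)^2 ∂P = a ^ (2*H₁) * b ^ (2*H₂) := by
    intro a b ha hb
    have h := hss a b ha hb 1 1 1 1 zero_le_one zero_le_one zero_le_one zero_le_one
    simp only [mul_one] at h
    rw [h111, mul_one] at h
    rw [show (fun ω => (X a b ω)^2) = fun ω => X a b ω * X a b ω from funext fun ω => sq (X a b ω)]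
    exact h
  -- rectangle increments: integrability and value
  have rect : ∀ u₁ u₂ w₁ w₂ : ℝ, 0 ≤ u₁ → 0 ≤ u₂ → u₁ ≤ w₁ → u₂ ≤ w₂ →
      Integrable (fun ω => (X w₁ w₂ ω - X u₁ w₂ ω - X w₁ u₂ ω + X u₁ u₂ ω)^2) P ∧
      ∫ ω, (X w₁ w₂ ω - X u₁ w₂ ω - X w₁ u₂ ω + X u₁ u₂ ω)^2 ∂P
        = (w₁ - u₁) ^ (2*H₁) * (w₂ - u₂) ^ (2*H₂) := by
    intro u₁ u₂ w₁ w₂ hu₁ hu₂ h₁ h₂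
    have hsi' := hsi u₁ u₂ (w₁ - u₁) (w₂ - u₂) hu₁ hu₂ (by linarith) (by linarith)
    rw [show u₁ + (w₁ - u₁) = w₁ by ring, show u₂ + (w₂ - u₂) = w₂ by ring] at hsi'
    have hrhs : ∫ ω, (X (w₁-u₁) (w₂-u₂) ω - X 0 (w₂-u₂) ω - X (w₁-u₁) 0 ω + X 0 0 ω)^2 ∂P
        = ∫ ω, (X (w₁-u₁) (w₂-u₂) ω)^2 ∂P := by
      apply integral_congr_ae
      filter_upwards [ax2 (w₂-u₂) (by linarith), ax1 (w₁-u₁) (by linarith), ax1 0 le_rfl]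
        with ω e1 e2 e3
      simp only [Pi.zero_apply] at e1 e2 e3
      rw [e1, e2, e3]; ring
    have hval : ∫ ω, (X (w₁-u₁) (w₂-u₂) ω)^2 ∂P = (w₁-u₁) ^ (2*H₁) * (w₂-u₂) ^ (2*H₂) := by
      rcases eq_or_lt_of_le (sub_nonneg.mpr h₁) with hd₁ | hd₁
      · have hz : w₁ - u₁ = 0 := hd₁.symm
        rw [hz, Real.zero_rpow (ne_of_gt h2H₁), zero_mul]
        have h0 : (fun ω => (X 0 (w₂-u₂) ω)^2) =ᵐ[P] (fun _ => (0:ℝ)) := by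
          filter_upwards [ax2 (w₂-u₂) (by linarith)] with ω e
          simp only [Pi.zero_apply] at e
          rw [e]; ring
        rw [integral_congr_ae h0, integral_zero]
      rcases eq_or_lt_of_le (sub_nonneg.mpr h₂) with hd₂ | hd₂
      · have hz : w₂ - u₂ = 0 := hd₂.symm
        rw [hz, Real.zero_rpow (ne_of_gt h2H₂), mul_zero]
        have h0 : (fun ω => (X (w₁-u₁) 0 ω)^2) =ᵐ[P] (fun _ => (0:ℝ)) := by
          filter_upwards [ax1 (w₁-u₁) (by linarith)] with ω e
          simp only [Pi.zero_apply] at e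
          rw [e]; ring
        rw [integral_congr_ae h0, integral_zero]
      · exact diag _ _ hd₁ hd₂
    have hval' : ∫ ω, (X w₁ w₂ ω - X u₁ w₂ ω - X w₁ u₂ ω + X u₁ u₂ ω)^2 ∂P
        = (w₁ - u₁) ^ (2*H₁) * (w₂ - u₂) ^ (2*H₂) := by rw [hsi', hrhs, hval]
    refine ⟨?_, hval'⟩
    rcases eq_or_lt_of_le h₁ with he₁ | he₁
    · have : (fun ω => (X w₁ w₂ ω - X u₁ w₂ ω - X w₁ u₂ ω + X u₁ u₂ ω)^2) = fun _ => (0:ℝ) := by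
        funext ω; rw [← he₁]; ring
      rw [this]; exact integrable_const 0
    rcases eq_or_lt_of_le h₂ with he₂ | he₂
    · have : (fun ω => (X w₁ w₂ ω - X u₁ w₂ ω - X w₁ u₂ ω + X u₁ u₂ ω)^2) = fun _ => (0:ℝ) := by
        funext ω; rw [← he₂]; ring
      rw [this]; exact integrable_const 0
    · by_contra hni
      rw [integral_undef hni] at hval'
      have : (0:ℝ) < (w₁ - u₁) ^ (2*H₁) * (w₂ - u₂) ^ (2*H₂) :=
        mul_pos (Real.rpow_pos_of_pos (by linarith) _) (Real.rpow_pos_of_pos (by linarith) _)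
      linarith
  have keynum : ∀ x y : ℝ, 1 ≤ x → 1 ≤ y →
      (∫ ω, X 1 1 ω * X x y ω ∂P) + (∫ ω, X x 1 ω * X 1 y ω ∂P)
      = (1 + x^(2*H₁) - (x-1)^(2*H₁)) * (1 + y^(2*H₂) - (y-1)^(2*H₂)) / 2 := by
    intro x y hx hy
    have hx0 : (0:ℝ) ≤ x := by linarith
    have hy0 : (0:ℝ) ≤ y := by linarith
    obtain ⟨I1, V1⟩ := rect 0 0 1 1 le_rfl le_rfl zero_le_one zero_le_one
    obtain ⟨I2, V2⟩ := rect 1 0 x 1 zero_le_one le_rfl hx zero_le_one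
    obtain ⟨I3, V3⟩ := rect 0 1 1 y le_rfl zero_le_one zero_le_one hy
    obtain ⟨I4, V4⟩ := rect 1 1 x y zero_le_one zero_le_one hx hy
    obtain ⟨I5, V5⟩ := rect 0 0 x 1 le_rfl le_rfl hx0 zero_le_one
    obtain ⟨I6, V6⟩ := rect 0 0 1 y le_rfl le_rfl zero_le_one hy0
    obtain ⟨I7, V7⟩ := rect 1 0 x y zero_le_one le_rfl hx hy0
    obtain ⟨I8, V8⟩ := rect 0 1 x y le_rfl zero_le_one hx0 hy
    obtain ⟨I9, V9⟩ := rect 0 0 x y le_rfl le_rfl hx0 hy0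
    have e5 : (fun ω => (X x 1 ω - X 0 1 ω - X x 0 ω + X 0 0 ω)^2) = (fun ω => ((X 1 1 ω - X 0 1 ω - X 1 0 ω + X 0 0 ω) + (X x 1 ω - X 1 1 ω - X x 0 ω + X 1 0 ω))^2) := by funext ω; ring
    have e6 : (fun ω => (X 1 y ω - X 0 y ω - X 1 0 ω + X 0 0 ω)^2) = (fun ω => ((X 1 1 ω - X 0 1 ω - X 1 0 ω + X 0 0 ω) + (X 1 y ω - X 0 y ω - X 1 1 ω + X 0 1 ω))^2) := by funext ω; ring
    have e7 : (fun ω => (X x y ω - X 1 y ω - X x 0 ω + X 1 0 ω)^2) = (fun ω => ((X x 1 ω - X 1 1 ω - X x 0 ω + X 1 0 ω) + (X x y ω - X 1 y ω - X x 1 ω + X 1 1 ω))^2) := by funext ω; ring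
    have e8 : (fun ω => (X x y ω - X 0 y ω - X x 1 ω + X 0 1 ω)^2) = (fun ω => ((X 1 y ω - X 0 y ω - X 1 1 ω + X 0 1 ω) + (X x y ω - X 1 y ω - X x 1 ω + X 1 1 ω))^2) := by funext ω; ring
    have e9 : (fun ω => (X x y ω - X 0 y ω - X x 0 ω + X 0 0 ω)^2) = (fun ω => ((X 1 1 ω - X 0 1 ω - X 1 0 ω + X 0 0 ω) + (X x 1 ω - X 1 1 ω - X x 0 ω + X 1 0 ω) + (X 1 y ω - X 0 y ω - X 1 1 ω + X 0 1 ω) + (X x y ω - X 1 y ω - X x 1 ω + X 1 1 ω))^2) := by funext ω; ring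
    rw [e5] at I5 V5
    rw [e6] at I6 V6
    rw [e7] at I7 V7
    rw [e8] at I8 V8
    rw [e9] at I9 V9
    simp only [sub_zero, Real.one_rpow, one_mul, mul_one] at V1 V2 V3 V4 V5 V6 V7 V8 V9
    have hcore := core_sum I1 V1 I2 V2 I3 V3 I4 V4 I5 V5 I6 V6 I7 V7 I8 V8 I9 V9
    have key1 : ∫ ω, X 1 1 ω * X x y ω ∂P = ∫ ω, (X 1 1 ω - X 0 1 ω - X 1 0 ω + X 0 0 ω) * ((X 1 1 ω - X 0 1 ω - X 1 0 ω + X 0 0 ω) + (X x 1 ω - X 1 1 ω - X x 0 ω + X 1 0 ω) + (X 1 y ω - X 0 y ω - X 1 1 ω + X 0 1 ω) + (X x y ω - X 1 y ω - X x 1 ω + X 1 1 ω)) ∂P := by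
      apply integral_congr_ae
      filter_upwards [ax2 1 zero_le_one, ax1 1 zero_le_one, ax1 0 le_rfl, ax2 y hy0, ax1 x hx0]
        with ω e1 e2 e3 e4 e5
      simp only [Pi.zero_apply] at e1 e2 e3 e4 e5
      rw [e1, e2, e3, e4, e5]; ring
    have key2 : ∫ ω, X x 1 ω * X 1 y ω ∂P = ∫ ω, ((X 1 1 ω - X 0 1 ω - X 1 0 ω + X 0 0 ω) + (X x 1 ω - X 1 1 ω - X x 0 ω + X 1 0 ω)) * ((X 1 1 ω - X 0 1 ω - X 1 0 ω + X 0 0 ω) + (X 1 y ω - X 0 y ω - X 1 1 ω + X 0 1 ω)) ∂P := by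
      apply integral_congr_ae
      filter_upwards [ax2 1 zero_le_one, ax1 1 zero_le_one, ax1 0 le_rfl, ax2 y hy0, ax1 x hx0]
        with ω e1 e2 e3 e4 e5
      simp only [Pi.zero_apply] at e1 e2 e3 e4 e5
      rw [e1, e2, e3, e4, e5]; ring
    rw [key1, key2]
    exact hcore
  have CS : ∀ v₁ v₂ : ℝ, R v₁ v₂ = R (-v₁) (-v₂) := by
    intro v₁ v₂
    have h := hss (Real.exp v₁) (Real.exp v₂) (Real.exp_pos _) (Real.exp_pos _)
      (Real.exp (-v₁)) (Real.exp (-v₂)) 1 1 (Real.exp_pos _).le (Real.exp_pos _).le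
      zero_le_one zero_le_one
    simp only [← Real.exp_add, add_neg_cancel, Real.exp_zero, mul_one] at h
    have hcomm : ∫ ω, X (Real.exp (-v₁)) (Real.exp (-v₂)) ω * X 1 1 ω ∂P
        = ∫ ω, X 1 1 ω * X (Real.exp (-v₁)) (Real.exp (-v₂)) ω ∂P :=
      integral_congr_ae (Filter.Eventually.of_forall fun ω => mul_comm _ _)
    rw [hcomm] at h
    rw [hR v₁ v₂, hR (-v₁) (-v₂), h, ← Real.exp_mul, ← Real.exp_mul]
    have hco : Real.exp (-(H₁ * v₁) - H₂ * v₂) * (Real.exp (v₁ * (2*H₁)) * Real.exp (v₂ * (2*H₂)))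
        = Real.exp (-(H₁ * -v₁) - H₂ * -v₂) := by
      rw [← Real.exp_add, ← Real.exp_add]; congr 1; ring
    rw [← hco]; ring
  have keyRnn : ∀ v₁ v₂ : ℝ, 0 ≤ v₁ → 0 ≤ v₂ →
      R v₁ v₂ + R (-v₁) v₂ = 2 * Rzero H₁ H₂ v₁ v₂ := by
    intro v₁ v₂ hv₁ hv₂
    have hk := keynum (Real.exp v₁) (Real.exp v₂) (Real.one_le_exp hv₁) (Real.one_le_exp hv₂)
    have hJ := hss (Real.exp v₁) 1 (Real.exp_pos _) one_pos 1 1 (Real.exp (-v₁)) (Real.exp v₂)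
      zero_le_one zero_le_one (Real.exp_pos _).le (Real.exp_pos _).le
    simp only [mul_one, one_mul, Real.one_rpow, ← Real.exp_add, add_neg_cancel,
      Real.exp_zero] at hJ
    rw [← Real.exp_mul] at hJ
    have hco : Real.exp (-(H₁ * -v₁) - H₂ * v₂)
        = Real.exp (-(H₁ * v₁) - H₂ * v₂) * Real.exp (v₁ * (2*H₁)) := by
      rw [← Real.exp_add]; congr 1; ring
    rw [hR v₁ v₂, hR (-v₁) v₂, hco]
    calc Real.exp (-(H₁ * v₁) - H₂ * v₂) * (∫ ω, X 1 1 ω * X (Real.exp v₁) (Real.exp v₂) ω ∂P)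
          + Real.exp (-(H₁ * v₁) - H₂ * v₂) * Real.exp (v₁ * (2*H₁))
            * (∫ ω, X 1 1 ω * X (Real.exp (-v₁)) (Real.exp v₂) ω ∂P)
        = Real.exp (-(H₁ * v₁) - H₂ * v₂)
            * ((∫ ω, X 1 1 ω * X (Real.exp v₁) (Real.exp v₂) ω ∂P)
              + (∫ ω, X (Real.exp v₁) 1 ω * X 1 (Real.exp v₂) ω ∂P)) := by
          rw [hJ]; ring
      _ = Real.exp (-(H₁ * v₁) - H₂ * v₂)
            * ((1 + (Real.exp v₁)^(2*H₁) - (Real.exp v₁ - 1)^(2*H₁))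
              * (1 + (Real.exp v₂)^(2*H₂) - (Real.exp v₂ - 1)^(2*H₂)) / 2) := by rw [hk]
      _ = 2 * Rzero H₁ H₂ v₁ v₂ := by
          rw [show -(H₁ * v₁) - H₂ * v₂ = -(H₁ * v₁) + -(H₂ * v₂) by ring, Real.exp_add]
          simp only [Rzero]
          rw [← Ffun_exp H₁ v₁ hv₁, ← Ffun_exp H₂ v₂ hv₂]
          ring
  have Rze1 : ∀ w₁ w₂ : ℝ, Rzero H₁ H₂ (-w₁) w₂ = Rzero H₁ H₂ w₁ w₂ := by
    intro w₁ w₂; simp only [Rzero, Ffun_even]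
  have Rze2 : ∀ w₁ w₂ : ℝ, Rzero H₁ H₂ w₁ (-w₂) = Rzero H₁ H₂ w₁ w₂ := by
    intro w₁ w₂; simp only [Rzero, Ffun_even]
  have keyR2 : ∀ v₁ v₂ : ℝ, 0 ≤ v₂ → R v₁ v₂ + R (-v₁) v₂ = 2 * Rzero H₁ H₂ v₁ v₂ := by
    intro v₁ v₂ hv₂
    rcases le_total 0 v₁ with h | h
    · exact keyRnn v₁ v₂ h hv₂
    · have hk := keyRnn (-v₁) v₂ (by linarith) hv₂
      rw [neg_neg, Rze1] at hk
      linarith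
  have keyR : ∀ v₁ v₂ : ℝ, R v₁ v₂ + R (-v₁) v₂ = 2 * Rzero H₁ H₂ v₁ v₂ := by
    intro v₁ v₂
    rcases le_total 0 v₂ with h | h
    · exact keyR2 v₁ v₂ h
    · have hk := keyR2 (-v₁) (-v₂) (by linarith)
      rw [neg_neg, Rze1, Rze2, ← CS v₁ v₂] at hk
      have h2 : R v₁ (-v₂) = R (-v₁) v₂ := by rw [CS v₁ (-v₂), neg_neg]
      rw [h2] at hk
      exact hk
  constructor
  · intro hsym v₁ v₂
    have h1 := keyR v₁ v₂
    have h2 : R v₁ (-v₂) = R (-v₁) v₂ := by rw [CS v₁ (-v₂), neg_neg]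
    have h3 := hsym v₁ v₂
    linarith
  · intro h0 v₁ v₂
    rw [h0 v₁ v₂, h0 v₁ (-v₂), Rze2]
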